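/- arXiv:2212.00642 — 2 statements merged into one kernel-verified Lean document; each statement's English description precedes it below -/
import Mathlib

section
/- Let G be a complete weighted graph on n vertices with every edge weight w(i,j) satisfying τ ≤ w(i,j) ≤ 1, and let L_G be its Laplacian. Then the second smallest eigenvalue of L_G satisfies λ₂(L_G) ≥ n τ³ / 16. -/
open Finset Matrix

/-- Let `G` be the complete weighted graph on `n ≥ 2` vertices with symmetric
edge weights `w i j ∈ [τ, 1]` for `i ≠ j` (and `w i i = 0`), `0 < τ ≤ 1`, and
let `L_G = D - A` be its combinatorial Laplacian.  Then the second smallest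
eigenvalue of `L_G` satisfies `λ₂(L_G) ≥ n * τ³ / 16`, expressed via the
variational characterization: for every vector `x` orthogonal to the all-ones
vector (i.e. `∑ i, x i = 0`), the Rayleigh quotient satisfies
`xᵀ L_G x ≥ (n τ³ / 16) * ‖x‖²`. -/
theorem lambda_two_laplacian_ge (n : ℕ) (hn : 2 ≤ n) (τ : ℝ)
    (hτ : 0 < τ) (hτ1 : τ ≤ 1)
    (w : Fin n → Fin n → ℝ) (hsymm : ∀ i j, w i j = w j i)
    (hdiag : ∀ i, w i i = 0)
    (hlo : ∀ i j, i ≠ j → τ ≤ w i j) (hhi : ∀ i j, i ≠ j → w i j ≤ 1)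
    (L : Matrix (Fin n) (Fin n) ℝ)
    (hL : L = Matrix.of (fun i j =>
      if i = j then ∑ k ∈ Finset.univ.erase i, w i k else - w i j))
    (x : Fin n → ℝ) (hx : ∑ i, x i = 0) :
    (n : ℝ) * τ ^ 3 / 16 * (∑ i, (x i) ^ 2) ≤ x ⬝ᵥ (L.mulVec x) := by
  -- Step 1: each entry of L.mulVec x
  have h1 : ∀ i, (L.mulVec x) i = (∑ k, w i k) * x i - ∑ j, w i j * x j := by
    intro i
    subst hL
    simp only [mulVec, dotProduct, Matrix.of_apply]
    have e : ∀ j, (if i = j then ∑ k ∈ Finset.univ.erase i, w i k else -w i j) * x j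
        = (if i = j then (∑ k, w i k) * x i else 0) - w i j * x j := by
      intro j
      by_cases h : i = j
      · subst h
        simp [Finset.sum_erase _ (hdiag i), hdiag i]
      · simp only [if_neg h]
        ring
    simp only [e, Finset.sum_sub_distrib, Finset.sum_ite_eq, Finset.mem_univ, if_true]
  -- Step 2: the quadratic form as a double sum
  have lhs : x ⬝ᵥ L.mulVec x
      = (∑ i, ∑ k, w i k * x i ^ 2) - ∑ i, ∑ j, w i j * (x i * x j) := by
    simp only [dotProduct, h1, mul_sub]
    rw [Finset.sum_sub_distrib]
    congr 1
    · apply Finset.sum_congr rfl; intro i _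
      rw [Finset.sum_mul, Finset.mul_sum]
      apply Finset.sum_congr rfl; intros; ring
    · apply Finset.sum_congr rfl; intro i _
      rw [Finset.mul_sum]
      apply Finset.sum_congr rfl; intros; ring
  have swap : ∑ i, ∑ j, w i j * x j ^ 2 = ∑ i, ∑ j, w i j * x i ^ 2 := by
    rw [Finset.sum_comm]
    apply Finset.sum_congr rfl; intro i _
    apply Finset.sum_congr rfl; intro j _
    rw [hsymm]
  have key : 2 * (x ⬝ᵥ L.mulVec x) = ∑ i, ∑ j, w i j * (x i - x j)^2 := by
    have rhs : ∑ i, ∑ j, w i j * (x i - x j)^2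
        = ∑ i, ∑ j, (w i j * x i ^ 2 + w i j * x j ^ 2 - 2 * (w i j * (x i * x j))) := by
      apply Finset.sum_congr rfl; intro i _
      apply Finset.sum_congr rfl; intro j _
      ring
    rw [lhs, rhs]
    simp only [Finset.sum_add_distrib, Finset.sum_sub_distrib, ← Finset.mul_sum]
    rw [swap]
    ring
  -- Step 3: lower bound the weights
  have h3 : τ * ∑ i, ∑ j, (x i - x j)^2 ≤ ∑ i, ∑ j, w i j * (x i - x j)^2 := by
    rw [Finset.mul_sum]
    apply Finset.sum_le_sum; intro i _
    rw [Finset.mul_sum]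
    apply Finset.sum_le_sum; intro j _
    by_cases h : i = j
    · subst h; simp
    · exact mul_le_mul_of_nonneg_right (hlo i j h) (sq_nonneg _)
  -- Step 4: compute the unweighted double sum
  have h4 : ∑ i, ∑ j, (x i - x j)^2 = 2 * n * ∑ i, x i ^ 2 := by
    have e : ∀ i : Fin n, ∑ j, (x i - x j)^2
        = n * x i ^ 2 + (∑ j, x j ^ 2) - 2 * x i * (∑ j, x j) := by
      intro i
      have e2 : ∀ j, (x i - x j)^2 = x i ^ 2 + x j ^ 2 - 2 * x i * x j := fun j => by ring
      simp only [e2, Finset.sum_add_distrib, Finset.sum_sub_distrib, Finset.sum_const,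
        Finset.card_univ, Fintype.card_fin, nsmul_eq_mul, mul_assoc, ← Finset.mul_sum]
    simp only [e, hx, mul_zero, sub_zero, Finset.sum_add_distrib, Finset.sum_const,
      Finset.card_univ, Fintype.card_fin, nsmul_eq_mul, ← Finset.mul_sum]
    ring
  -- Conclude
  have hS : 0 ≤ ∑ i, x i ^ 2 := Finset.sum_nonneg fun i _ => sq_nonneg _
  have hN : (0:ℝ) ≤ n := Nat.cast_nonneg n
  have hfac : 0 ≤ (↑n * ∑ i, x i ^ 2) * (τ * (16 - τ^2)) := by
    apply mul_nonneg (mul_nonneg hN hS)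
    nlinarith
  nlinarith [key, h3, h4]
end

section
/- Let A and B be symmetric PSD matrices on ℝⁿ with the same null space, satisfying (1−ε)A ⪯ B ⪯ (1+ε)A for some 0 < ε < 1. Then (1/(1+ε))A⁺ ⪯ B⁺ ⪯ (1/(1−ε))A⁺, where ⁺ denotes the Moore–Penrose pseudoinverse; in particular (1−ε)A⁺ ⪯ B⁺ ⪯ (1+2ε)A⁺ for ε ≤ 1/2. -/
open Matrix

section Aux

variable {n : ℕ}

private lemma dp_symm_left (M : Matrix (Fin n) (Fin n) ℝ) (hM : Mᵀ = M)
    (u w : Fin n → ℝ) : (M *ᵥ u) ⬝ᵥ w = u ⬝ᵥ (M *ᵥ w) := by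
  calc (M *ᵥ u) ⬝ᵥ w = (u ᵥ* Mᵀ) ⬝ᵥ w := by rw [vecMul_transpose]
    _ = u ⬝ᵥ (Mᵀ *ᵥ w) := (dotProduct_mulVec u Mᵀ w).symm
    _ = u ⬝ᵥ (M *ᵥ w) := by rw [hM]

private lemma eq_zero_of_mulVec (M : Matrix (Fin n) (Fin n) ℝ)
    (h : ∀ x, M *ᵥ x = 0) : M = 0 := by
  ext i j
  have := congrFun (h (Pi.single j 1)) i
  simpa using this

private lemma psd_cauchy_schwarz (M : Matrix (Fin n) (Fin n) ℝ)
    (hMt : Mᵀ = M) (hM : ∀ x, 0 ≤ x ⬝ᵥ (M *ᵥ x)) (u v : Fin n → ℝ) :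
    (u ⬝ᵥ (M *ᵥ v)) ^ 2 ≤ (u ⬝ᵥ (M *ᵥ u)) * (v ⬝ᵥ (M *ᵥ v)) := by
  have key : ∀ lam : ℝ, 0 ≤ (v ⬝ᵥ (M *ᵥ v)) * (lam * lam)
      + (2 * (u ⬝ᵥ (M *ᵥ v))) * lam + (u ⬝ᵥ (M *ᵥ u)) := by
    intro lam
    have h0 := hM (u + lam • v)
    have hsym : v ⬝ᵥ (M *ᵥ u) = u ⬝ᵥ (M *ᵥ v) := by
      rw [← dp_symm_left M hMt v u, dotProduct_comm]
    simp only [mulVec_add, mulVec_smul, dotProduct_add, add_dotProduct,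
      smul_dotProduct, dotProduct_smul, smul_eq_mul] at h0
    rw [hsym] at h0
    nlinarith [h0]
  have hd := discrim_le_zero key
  rw [discrim] at hd
  nlinarith [hd]

private lemma pinv_unique (M X Y : Matrix (Fin n) (Fin n) ℝ)
    (hX1 : M * X * M = M) (hX2 : X * M * X = X)
    (hX3 : (M * X)ᵀ = M * X) (hX4 : (X * M)ᵀ = X * M)
    (hY1 : M * Y * M = M) (hY2 : Y * M * Y = Y)
    (hY3 : (M * Y)ᵀ = M * Y) (hY4 : (Y * M)ᵀ = Y * M) : X = Y := by
  have h1 : M * X = M * Y := by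
    have e1 : M * X = (M * Y) * (M * X) := by
      conv_lhs => rw [← hY1]
      noncomm_ring
    have e3 : (M * X) * (M * Y) = M * Y := by
      conv_rhs => rw [← hX1]
      noncomm_ring
    calc M * X = (M * Y) * (M * X) := e1
      _ = (M * Y)ᵀ * (M * X)ᵀ := by rw [hY3, hX3]
      _ = ((M * X) * (M * Y))ᵀ := by rw [← transpose_mul]
      _ = (M * Y)ᵀ := by rw [e3]
      _ = M * Y := hY3
  have h2 : X * M = Y * M := by
    have e1 : X * M = (X * M) * (Y * M) := by
      conv_lhs => rw [← hY1]
      noncomm_ring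
    have e3 : (Y * M) * (X * M) = Y * M := by
      conv_rhs => rw [← hX1]
      noncomm_ring
    calc X * M = (X * M) * (Y * M) := e1
      _ = (X * M)ᵀ * (Y * M)ᵀ := by rw [hX4, hY4]
      _ = ((Y * M) * (X * M))ᵀ := by rw [← transpose_mul]
      _ = (Y * M)ᵀ := by rw [e3]
      _ = Y * M := hY4
  calc X = X * M * X := hX2.symm
    _ = Y * M * X := by rw [h2]
    _ = Y * (M * X) := by rw [mul_assoc]
    _ = Y * (M * Y) := by rw [h1]
    _ = Y * M * Y := by rw [mul_assoc]
    _ = Y := hY2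

end Aux

/-- Pseudoinverse monotonicity: if `A`, `B` are symmetric PSD matrices on `ℝⁿ`
with the same null space satisfying `(1-ε) A ⪯ B ⪯ (1+ε) A` for `0 < ε < 1`,
and `P = A⁺`, `Q = B⁺` are their Moore–Penrose pseudoinverses (characterized by
the four Penrose conditions), then `(1/(1+ε)) A⁺ ⪯ B⁺ ⪯ (1/(1-ε)) A⁺`; and in
particular `(1-ε) A⁺ ⪯ B⁺ ⪯ (1+2ε) A⁺` whenever `ε ≤ 1/2`. -/
theorem pinv_loewner_monotone (n : ℕ) (ε : ℝ) (hε0 : 0 < ε) (hε1 : ε < 1)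
    (A B : Matrix (Fin n) (Fin n) ℝ)
    (hA : A.PosSemidef) (hB : B.PosSemidef)
    (hker : ∀ x, A.mulVec x = 0 ↔ B.mulVec x = 0)
    (hlow : (B - (1 - ε) • A).PosSemidef)
    (hhigh : ((1 + ε) • A - B).PosSemidef)
    (P Q : Matrix (Fin n) (Fin n) ℝ)
    (hP1 : A * P * A = A) (hP2 : P * A * P = P)
    (hP3 : (A * P).transpose = A * P) (hP4 : (P * A).transpose = P * A)
    (hQ1 : B * Q * B = B) (hQ2 : Q * B * Q = Q)
    (hQ3 : (B * Q).transpose = B * Q) (hQ4 : (Q * B).transpose = Q * B) :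
    (Q - (1 / (1 + ε)) • P).PosSemidef ∧
    ((1 / (1 - ε)) • P - Q).PosSemidef ∧
    (ε ≤ 1/2 →
      (Q - (1 - ε) • P).PosSemidef ∧ ((1 + 2 * ε) • P - Q).PosSemidef) := by
  have h1pε : (0:ℝ) < 1 + ε := by linarith
  have h1mε : (0:ℝ) < 1 - ε := by linarith
  have hAt : Aᵀ = A := by
    rw [← conjTranspose_eq_transpose_of_trivial]; exact hA.1
  have hBt : Bᵀ = B := by
    rw [← conjTranspose_eq_transpose_of_trivial]; exact hB.1
  -- symmetry of P and Q via uniqueness of the pseudoinverse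
  have hPt : Pᵀ = P := by
    have c1 : A * Pᵀ * A = A := by
      have := congrArg transpose hP1
      simpa [transpose_mul, hAt, mul_assoc] using this
    have c2 : Pᵀ * A * Pᵀ = Pᵀ := by
      have := congrArg transpose hP2
      simpa [transpose_mul, hAt, mul_assoc] using this
    have hx : A * Pᵀ = P * A := by
      calc A * Pᵀ = (P * Aᵀ)ᵀ := by simp [transpose_mul]
        _ = (P * A)ᵀ := by rw [hAt]
        _ = P * A := hP4
    have hy : Pᵀ * A = A * P := by
      calc Pᵀ * A = (Aᵀ * P)ᵀ := by simp [transpose_mul]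
        _ = (A * P)ᵀ := by rw [hAt]
        _ = A * P := hP3
    have c3 : (A * Pᵀ)ᵀ = A * Pᵀ := by rw [hx]; exact hP4
    have c4 : (Pᵀ * A)ᵀ = Pᵀ * A := by rw [hy]; exact hP3
    exact pinv_unique A Pᵀ P c1 c2 c3 c4 hP1 hP2 hP3 hP4
  have hQt : Qᵀ = Q := by
    have c1 : B * Qᵀ * B = B := by
      have := congrArg transpose hQ1
      simpa [transpose_mul, hBt, mul_assoc] using this
    have c2 : Qᵀ * B * Qᵀ = Qᵀ := by
      have := congrArg transpose hQ2
      simpa [transpose_mul, hBt, mul_assoc] using this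
    have hx : B * Qᵀ = Q * B := by
      calc B * Qᵀ = (Q * Bᵀ)ᵀ := by simp [transpose_mul]
        _ = (Q * B)ᵀ := by rw [hBt]
        _ = Q * B := hQ4
    have hy : Qᵀ * B = B * Q := by
      calc Qᵀ * B = (Bᵀ * Q)ᵀ := by simp [transpose_mul]
        _ = (B * Q)ᵀ := by rw [hBt]
        _ = B * Q := hQ3
    have c3 : (B * Qᵀ)ᵀ = B * Qᵀ := by rw [hx]; exact hQ4
    have c4 : (Qᵀ * B)ᵀ = Qᵀ * B := by rw [hy]; exact hQ3
    exact pinv_unique B Qᵀ Q c1 c2 c3 c4 hQ1 hQ2 hQ3 hQ4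
  -- the common-kernel identities
  have key1 : B * P * A = B := by
    have h : ∀ x, (B * P * A) *ᵥ x = B *ᵥ x := by
      intro x
      have hAx : A *ᵥ ((P * A) *ᵥ x - x) = 0 := by
        rw [mulVec_sub, mulVec_mulVec, ← mul_assoc, hP1, sub_self]
      have hBx := (hker _).mp hAx
      rw [mulVec_sub, mulVec_mulVec, ← mul_assoc, sub_eq_zero] at hBx
      exact hBx
    have hz := eq_zero_of_mulVec (B * P * A - B)
      (fun x => by rw [sub_mulVec, h, sub_self])
    exact sub_eq_zero.mp hz
  have key2 : A * Q * B = A := by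
    have h : ∀ x, (A * Q * B) *ᵥ x = A *ᵥ x := by
      intro x
      have hBx : B *ᵥ ((Q * B) *ᵥ x - x) = 0 := by
        rw [mulVec_sub, mulVec_mulVec, ← mul_assoc, hQ1, sub_self]
      have hAx := (hker _).mpr hBx
      rw [mulVec_sub, mulVec_mulVec, ← mul_assoc, sub_eq_zero] at hAx
      exact hAx
    have hz := eq_zero_of_mulVec (A * Q * B - A)
      (fun x => by rw [sub_mulVec, h, sub_self])
    exact sub_eq_zero.mp hz
  have key1t : A * P * B = B := by
    have := congrArg transpose key1
    simpa [transpose_mul, hAt, hBt, hPt, mul_assoc] using this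
  have key2t : B * Q * A = A := by
    have := congrArg transpose key2
    simpa [transpose_mul, hAt, hBt, hQt, mul_assoc] using this
  -- the two orthogonal projections agree : B*Q = A*P
  have e1 : (B * Q) * (B * Q) = B * Q := by rw [← mul_assoc, hQ1]
  have e2 : (B * Q) * (A * P) = A * P := by rw [← mul_assoc, key2t]
  have e3 : (A * P) * (B * Q) = B * Q := by rw [← mul_assoc, key1t]
  have e4 : (A * P) * (A * P) = A * P := by rw [← mul_assoc, hP1]
  have hMM : (B * Q - A * P) * (B * Q - A * P) = 0 := by
    rw [sub_mul, mul_sub, mul_sub, e1, e2, e3, e4]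
    abel
  have hMt : (B * Q - A * P)ᵀ = B * Q - A * P := by
    rw [transpose_sub, hQ3, hP3]
  have hM0 : B * Q = A * P := by
    have hz : ∀ x, (B * Q - A * P) *ᵥ x = 0 := by
      intro x
      rw [← dotProduct_self_eq_zero, dp_symm_left _ hMt, mulVec_mulVec, hMM,
        zero_mulVec, dotProduct_zero]
    exact sub_eq_zero.mp (eq_zero_of_mulVec _ hz)
  -- quadratic-form identities
  have hQAP : Q * (A * P) = Q := by rw [← hM0, ← mul_assoc, hQ2]
  have hQAPl : Q * A * P = Q := by rw [mul_assoc, hQAP]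
  have hPAQ : P * A * Q = Q := by
    have := congrArg transpose hQAPl
    simpa [transpose_mul, hAt, hPt, hQt, mul_assoc] using this
  have hPBQ : P * B * Q = P := by rw [mul_assoc, hM0, ← mul_assoc, hP2]
  have hs_eq : ∀ x : Fin n → ℝ,
      x ⬝ᵥ (P *ᵥ x) = (P *ᵥ x) ⬝ᵥ (A *ᵥ (P *ᵥ x)) := by
    intro x
    rw [dp_symm_left P hPt, mulVec_mulVec, mulVec_mulVec, hP2]
  have ht_eq : ∀ x : Fin n → ℝ,
      x ⬝ᵥ (Q *ᵥ x) = (Q *ᵥ x) ⬝ᵥ (B *ᵥ (Q *ᵥ x)) := by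
    intro x
    rw [dp_symm_left Q hQt, mulVec_mulVec, mulVec_mulVec, hQ2]
  have hst : ∀ x : Fin n → ℝ,
      x ⬝ᵥ (Q *ᵥ x) = (P *ᵥ x) ⬝ᵥ (A *ᵥ (Q *ᵥ x)) := by
    intro x
    rw [dp_symm_left P hPt, mulVec_mulVec, mulVec_mulVec, hPAQ]
  have hsb : ∀ x : Fin n → ℝ,
      x ⬝ᵥ (P *ᵥ x) = (P *ᵥ x) ⬝ᵥ (B *ᵥ (Q *ᵥ x)) := by
    intro x
    rw [dp_symm_left P hPt, mulVec_mulVec, mulVec_mulVec, hPBQ]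
  -- scalar versions of PSD assumptions
  have hA2 : ∀ x, 0 ≤ x ⬝ᵥ (A *ᵥ x) := fun x => by simpa using hA.dotProduct_mulVec_nonneg x
  have hB2 : ∀ x, 0 ≤ x ⬝ᵥ (B *ᵥ x) := fun x => by simpa using hB.dotProduct_mulVec_nonneg x
  have hlow2 : ∀ x, (1 - ε) * (x ⬝ᵥ (A *ᵥ x)) ≤ x ⬝ᵥ (B *ᵥ x) := by
    intro x
    have := hlow.dotProduct_mulVec_nonneg x
    simp only [star_trivial, sub_mulVec, smul_mulVec, dotProduct_sub,
      dotProduct_smul, smul_eq_mul] at this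
    linarith
  have hhigh2 : ∀ x, x ⬝ᵥ (B *ᵥ x) ≤ (1 + ε) * (x ⬝ᵥ (A *ᵥ x)) := by
    intro x
    have := hhigh.dotProduct_mulVec_nonneg x
    simp only [star_trivial, sub_mulVec, smul_mulVec, dotProduct_sub,
      dotProduct_smul, smul_eq_mul] at this
    linarith
  have hs0 : ∀ x, 0 ≤ x ⬝ᵥ (P *ᵥ x) := by
    intro x; rw [hs_eq x]; exact hA2 _
  have ht0 : ∀ x, 0 ≤ x ⬝ᵥ (Q *ᵥ x) := by
    intro x; rw [ht_eq x]; exact hB2 _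
  -- the two main scalar inequalities
  have main1 : ∀ x : Fin n → ℝ,
      (1 / (1 + ε)) * (x ⬝ᵥ (P *ᵥ x)) ≤ x ⬝ᵥ (Q *ᵥ x) := by
    intro x
    have cs := psd_cauchy_schwarz B hBt hB2 (P *ᵥ x) (Q *ᵥ x)
    rw [← hsb x, ← ht_eq x] at cs
    have hr : (P *ᵥ x) ⬝ᵥ (B *ᵥ (P *ᵥ x)) ≤ (1 + ε) * (x ⬝ᵥ (P *ᵥ x)) := by
      have := hhigh2 (P *ᵥ x)
      rwa [← hs_eq x] at this
    have hr0 : 0 ≤ (P *ᵥ x) ⬝ᵥ (B *ᵥ (P *ᵥ x)) := hB2 _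
    have hs := hs0 x
    have ht := ht0 x
    rcases lt_or_eq_of_le hs with hpos | hzero
    · have hle : x ⬝ᵥ (P *ᵥ x) ≤ (1 + ε) * (x ⬝ᵥ (Q *ᵥ x)) := by
        nlinarith [mul_le_mul_of_nonneg_right hr ht]
      rw [one_div_mul_eq_div, div_le_iff₀ h1pε]
      linarith
    · rw [← hzero, mul_zero]
      exact ht
  have main2 : ∀ x : Fin n → ℝ,
      x ⬝ᵥ (Q *ᵥ x) ≤ (1 / (1 - ε)) * (x ⬝ᵥ (P *ᵥ x)) := by
    intro x
    have cs := psd_cauchy_schwarz A hAt hA2 (P *ᵥ x) (Q *ᵥ x)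
    rw [← hst x, ← hs_eq x] at cs
    have hq : (1 - ε) * ((Q *ᵥ x) ⬝ᵥ (A *ᵥ (Q *ᵥ x))) ≤ x ⬝ᵥ (Q *ᵥ x) := by
      have := hlow2 (Q *ᵥ x)
      rwa [← ht_eq x] at this
    have hq0 : 0 ≤ (Q *ᵥ x) ⬝ᵥ (A *ᵥ (Q *ᵥ x)) := hA2 _
    have hs := hs0 x
    have ht := ht0 x
    rcases lt_or_eq_of_le ht with hpos | hzero
    · have hle : (1 - ε) * (x ⬝ᵥ (Q *ᵥ x)) ≤ x ⬝ᵥ (P *ᵥ x) := by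
        nlinarith [mul_le_mul_of_nonneg_left hq hs]
      rw [one_div_mul_eq_div, le_div_iff₀ h1mε]
      linarith
    · rw [← hzero]
      positivity
  -- expansion of the goal quadratic forms
  have expand1 : ∀ (c : ℝ) (x : Fin n → ℝ),
      x ⬝ᵥ ((Q - c • P) *ᵥ x) = x ⬝ᵥ (Q *ᵥ x) - c * (x ⬝ᵥ (P *ᵥ x)) := by
    intro c x
    simp [sub_mulVec, smul_mulVec, dotProduct_sub, dotProduct_smul,
      smul_eq_mul]
  have expand2 : ∀ (c : ℝ) (x : Fin n → ℝ),
      x ⬝ᵥ ((c • P - Q) *ᵥ x) = c * (x ⬝ᵥ (P *ᵥ x)) - x ⬝ᵥ (Q *ᵥ x) := by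
    intro c x
    simp [sub_mulVec, smul_mulVec, dotProduct_sub, dotProduct_smul,
      smul_eq_mul]
  have herm1 : ∀ c : ℝ, (Q - c • P).IsHermitian := by
    intro c
    rw [IsHermitian, conjTranspose_eq_transpose_of_trivial, transpose_sub,
      transpose_smul, hPt, hQt]
  have herm2 : ∀ c : ℝ, (c • P - Q).IsHermitian := by
    intro c
    rw [IsHermitian, conjTranspose_eq_transpose_of_trivial, transpose_sub,
      transpose_smul, hPt, hQt]
  refine ⟨.of_dotProduct_mulVec_nonneg (herm1 _) fun x => ?_, .of_dotProduct_mulVec_nonneg (herm2 _) fun x => ?_, fun hε2 => ?_⟩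
  · have := main1 x
    simp only [star_trivial, expand1]
    linarith
  · have := main2 x
    simp only [star_trivial, expand2]
    linarith
  refine ⟨.of_dotProduct_mulVec_nonneg (herm1 _) fun x => ?_, .of_dotProduct_mulVec_nonneg (herm2 _) fun x => ?_⟩
  · have h1 := main1 x
    have hs := hs0 x
    have hcoef : (1 - ε) ≤ 1 / (1 + ε) := by
      rw [le_div_iff₀ h1pε]; nlinarith
    simp only [star_trivial, expand1]
    linarith [mul_le_mul_of_nonneg_right hcoef hs]
  · have h2 := main2 x
    have hs := hs0 x
    have hcoef : 1 / (1 - ε) ≤ 1 + 2 * ε := by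
      rw [div_le_iff₀ h1mε]; nlinarith
    simp only [star_trivial, expand2]
    linarith [mul_le_mul_of_nonneg_right hcoef hs]
end
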